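/- The asymptotic growth constant of the number of spanning trees of the (1,3)-flower F_n equals (1/6)(4·ln 2 + ln 3); that is, lim_{n→∞} ln τ(F_n) / |V(F_n)| = (1/6)(4·ln 2 + ln 3). -/

import Mathlib

open scoped Classical

noncomputable section

/-- A finite two-terminal graph: a finite simple graph together with two
distinct distinguished vertices `X` and `Y`. -/
structure TTG where
  V : Type
  [instFintypeV : Fintype V]
  G : SimpleGraph V
  X : V
  Y : V
  hXY : X ≠ Y

attribute [instance] TTG.instFintypeV

/-- `K_2`, with its two vertices as the terminals `X_0` and `Y_0`. -/
def TTG.base : TTG where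
  V := Fin 2
  G := ⊤
  X := 0
  Y := 1
  hXY := by decide

namespace TTG

/-- The embedding of the `i`-th copy of `H` (for `i : Fin 4`) into the vertex set of the
`(1,3)`-merge of four copies of `H`, in which `X` of copy `0` is identified with `X` of
copy `1` (the new terminal `X`), `Y` of copy `0` with `Y` of copy `3` (the new terminal
`Y`), `Y` of copy `1` with `X` of copy `2`, and `Y` of copy `2` with `X` of copy `3`. -/
def iota13 (H : TTG) (i : Fin 4) (a : H.V) :
    {v : H.V // v ≠ H.Y} ⊕ (Fin 3 × {v : H.V // v ≠ H.X}) :=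
  if i = 0 then
    if h : a = H.Y then Sum.inr (2, ⟨H.Y, Ne.symm H.hXY⟩) else Sum.inl ⟨a, h⟩
  else if i = 1 then
    if h : a = H.X then Sum.inl ⟨H.X, H.hXY⟩ else Sum.inr (0, ⟨a, h⟩)
  else if i = 2 then
    if h : a = H.X then Sum.inr (0, ⟨H.Y, Ne.symm H.hXY⟩) else Sum.inr (1, ⟨a, h⟩)
  else
    if h : a = H.X then Sum.inr (1, ⟨H.Y, Ne.symm H.hXY⟩) else Sum.inr (2, ⟨a, h⟩)

/-- The `(1,3)`-merge of four disjoint copies of `H`: `X` of copy `0` is identified with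
`X` of copy `1` (the new terminal `X`), `Y` of copy `0` with `Y` of copy `3` (the new
terminal `Y`), `Y` of copy `1` with `X` of copy `2`, and `Y` of copy `2` with `X` of
copy `3`; thus the two new terminals are joined by copy `0` directly and by the chain of
copies `1`, `2`, `3`. -/
def step13 (H : TTG) : TTG where
  V := {v : H.V // v ≠ H.Y} ⊕ (Fin 3 × {v : H.V // v ≠ H.X})
  G := SimpleGraph.fromRel (fun u w =>
        ∃ i a b, H.G.Adj a b ∧ u = H.iota13 i a ∧ w = H.iota13 i b)
  X := Sum.inl ⟨H.X, H.hXY⟩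
  Y := Sum.inr (2, ⟨H.Y, Ne.symm H.hXY⟩)
  hXY := by simp

end TTG

/-- The `(1,3)`-flower `F_n`: `F_0 = K_2`, and `F_{n+1}` is the `(1,3)`-merge of four
copies of `F_n`. -/
def flower13 : ℕ → TTG
  | 0 => TTG.base
  | n + 1 => TTG.step13 (flower13 n)

/-- The number `τ(G)` of spanning trees of `G`: the number of edge sets `A ⊆ E(G)` for
which the spanning subgraph `(V, A)` is connected and acyclic. -/
def spanningTreeCount {V : Type} [Fintype V] (G : SimpleGraph V) : ℕ :=
  Nat.card {A : Finset (Sym2 V) // A ⊆ G.edgeFinset ∧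
    (SimpleGraph.fromEdgeSet (A : Set (Sym2 V))).Connected ∧
    (SimpleGraph.fromEdgeSet (A : Set (Sym2 V))).IsAcyclic}

/-!
Cut `F_{n+1}` at its four junctions: the four copies of `F_n` form a 4-cycle on them. Two junctions
are connected in a subgraph exactly when they are linked along the cycle through copies whose
piece joins that copy's terminals (a two-colouring of the junctions separates them otherwise).
Hence an edge set of `F_{n+1}` is a spanning tree iff all copies meet it in spanning trees except
one, which meets it in a spanning forest with two trees separating that copy's terminals; and the
forests of `F_{n+1}` separating its terminals are those in which the copy joining them directly and
exactly one copy of the chain are separating forests, the others trees. That the pieces are no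
larger than trees or forests follows from counting edges. Writing `τ_n` and `φ_n` for the two
counts, `τ_{n+1} = 4 φ_n τ_n³`, `φ_{n+1} = 3 φ_n² τ_n²` and `τ_0 = φ_0 = 1`, whence
`9 ln τ_n = (4^{n+1} + 6n - 4) ln 2 + (4^n - 3n - 1) ln 3`, while `|V(F_n)| = (2·4^n + 4)/3`.
-/

namespace SimpleGraph

open Finset

variable {V : Type*} {Γ : SimpleGraph V} {A : Finset (Sym2 V)} {x y : V}

lemma connected_sup_edge (hxy : x ≠ y) (h : ∀ v, Γ.Reachable v x ∨ Γ.Reachable v y) :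
    (Γ ⊔ edge x y).Connected := by
  have hyx : (Γ ⊔ edge x y).Reachable y x := (Adj.reachable (by simp [edge_adj, hxy])).symm
  have hx : ∀ v, (Γ ⊔ edge x y).Reachable v x := fun v ↦ by
    rcases h v with h | h
    · exact h.mono le_sup_left
    · exact (h.mono le_sup_left).trans hyx
  have : Nonempty V := ⟨x⟩
  exact ⟨fun u v ↦ (hx u).trans (hx v).symm⟩

lemma card_edgeSet_fromEdgeSet (hA : ∀ e ∈ A, ¬e.IsDiag) :
    Nat.card (fromEdgeSet (A : Set (Sym2 V))).edgeSet = #A := by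
  rw [edgeSet_fromEdgeSet, sdiff_eq_left.mpr, Nat.card_coe_set_eq, Set.ncard_coe_finset]
  exact Set.disjoint_left.mpr fun e he ↦ hA e he

lemma fromEdgeSet_insert_eq_sup_edge :
    fromEdgeSet (↑(insert s(x, y) A) : Set (Sym2 V)) = fromEdgeSet ↑A ⊔ edge x y := by
  rw [edge, ← fromEdgeSet_union, Finset.coe_insert, Set.insert_eq, Set.union_comm]

lemma Reachable.mem_of_adj_closed {S : Set V} {u w : V} (hS : ∀ u w, u ∈ S → Γ.Adj u w → w ∈ S)
    (h : Γ.Reachable u w) (hu : u ∈ S) : w ∈ S := by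
  obtain ⟨p⟩ := h
  induction p with
  | nil => exact hu
  | cons hadj _ ih => exact ih (hS _ _ hu hadj)

variable [Fintype V] {G : SimpleGraph V}

def IsSpanningTreeEdges (G : SimpleGraph V) (A : Finset (Sym2 V)) : Prop :=
  A ⊆ G.edgeFinset ∧ (fromEdgeSet (A : Set (Sym2 V))).Connected ∧
    (fromEdgeSet (A : Set (Sym2 V))).IsAcyclic

def IsSeparatingForestEdges (G : SimpleGraph V) (x y : V) (A : Finset (Sym2 V)) : Prop :=
  A ⊆ G.edgeFinset ∧ (fromEdgeSet (A : Set (Sym2 V))).IsAcyclic ∧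
    ¬(fromEdgeSet (A : Set (Sym2 V))).Reachable x y ∧
    ∀ v, (fromEdgeSet (A : Set (Sym2 V))).Reachable v x ∨
      (fromEdgeSet (A : Set (Sym2 V))).Reachable v y

lemma not_isDiag_of_subset_edgeFinset (hA : A ⊆ G.edgeFinset) : ∀ e ∈ A, ¬e.IsDiag :=
  fun _ he ↦ G.not_isDiag_of_mem_edgeSet (mem_edgeFinset.mp (hA he))

lemma card_le_card_add_one_of_connected (hA : A ⊆ G.edgeFinset)
    (h : (fromEdgeSet (A : Set (Sym2 V))).Connected) : Fintype.card V ≤ #A + 1 := by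
  simpa only [card_edgeSet_fromEdgeSet (not_isDiag_of_subset_edgeFinset hA),
    Nat.card_eq_fintype_card] using h.card_vert_le_card_edgeSet_add_one

lemma isSpanningTreeEdges_iff : IsSpanningTreeEdges G A ↔ A ⊆ G.edgeFinset ∧
    (fromEdgeSet (A : Set (Sym2 V))).Connected ∧ #A + 1 = Fintype.card V := by
  refine and_congr_right fun hA ↦ ?_
  rw [← isTree_iff, isTree_iff_connected_and_card,
    card_edgeSet_fromEdgeSet (not_isDiag_of_subset_edgeFinset hA), Nat.card_eq_fintype_card]

/-- The missing edge `xy` turns a separating forest into a spanning tree. -/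
lemma card_le_card_add_two_of_forall_reachable (hA : A ⊆ G.edgeFinset) (hxy : x ≠ y)
    (h : ∀ v, (fromEdgeSet (A : Set (Sym2 V))).Reachable v x ∨
      (fromEdgeSet (A : Set (Sym2 V))).Reachable v y) :
    Fintype.card V ≤ #A + 2 := by
  have hA' : ∀ e ∈ insert s(x, y) A, ¬e.IsDiag := by
    simpa [hxy] using not_isDiag_of_subset_edgeFinset hA
  have := (fromEdgeSet_insert_eq_sup_edge ▸
    connected_sup_edge hxy h).card_vert_le_card_edgeSet_add_one
  rw [card_edgeSet_fromEdgeSet hA', Nat.card_eq_fintype_card] at this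
  have := card_insert_le s(x, y) A
  omega

lemma isSeparatingForestEdges_iff (hxy : x ≠ y) : IsSeparatingForestEdges G x y A ↔
    A ⊆ G.edgeFinset ∧ ¬(fromEdgeSet (A : Set (Sym2 V))).Reachable x y ∧
      (∀ v, (fromEdgeSet (A : Set (Sym2 V))).Reachable v x ∨
        (fromEdgeSet (A : Set (Sym2 V))).Reachable v y) ∧ #A + 2 = Fintype.card V := by
  suffices key : ∀ hA : A ⊆ G.edgeFinset, ¬(fromEdgeSet (A : Set (Sym2 V))).Reachable x y →
      (∀ v, (fromEdgeSet (A : Set (Sym2 V))).Reachable v x ∨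
        (fromEdgeSet (A : Set (Sym2 V))).Reachable v y) →
      ((fromEdgeSet (A : Set (Sym2 V))).IsAcyclic ↔ #A + 2 = Fintype.card V) from
    ⟨fun ⟨hA, hac, hnr, hre⟩ ↦ ⟨hA, hnr, hre, (key hA hnr hre).1 hac⟩,
      fun ⟨hA, hnr, hre, hcard⟩ ↦ ⟨hA, (key hA hnr hre).2 hcard, hnr, hre⟩⟩
  intro hA hnr hre
  have hxyA : s(x, y) ∉ A := fun h ↦ hnr (Adj.reachable (by simp [h, hxy]))
  have hA' : ∀ e ∈ insert s(x, y) A, ¬e.IsDiag := by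
    simpa [hxy] using not_isDiag_of_subset_edgeFinset hA
  have hconn := connected_sup_edge hxy hre
  rw [← fromEdgeSet_insert_eq_sup_edge] at hconn
  calc (fromEdgeSet (A : Set (Sym2 V))).IsAcyclic
      ↔ (fromEdgeSet (↑(insert s(x, y) A) : Set (Sym2 V))).IsTree := by
        rw [isTree_iff, fromEdgeSet_insert_eq_sup_edge,
          isAcyclic_add_edge_iff_of_not_reachable x y hnr]
        simp [fromEdgeSet_insert_eq_sup_edge ▸ hconn]
    _ ↔ #A + 2 = Fintype.card V := by
        rw [isTree_iff_connected_and_card, card_edgeSet_fromEdgeSet hA',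
          card_insert_of_notMem hxyA, Nat.card_eq_fintype_card, and_iff_right hconn]

lemma mem_edgeSet_top_fin_two {e : Sym2 (Fin 2)} :
    e ∈ (⊤ : SimpleGraph (Fin 2)).edgeSet ↔ e = s(0, 1) := by
  induction e using Sym2.ind with | _ a b =>
  fin_cases a <;> fin_cases b <;> simp [Sym2.eq_swap]

lemma isSpanningTreeEdges_top_fin_two_iff {A : Finset (Sym2 (Fin 2))} :
    IsSpanningTreeEdges ⊤ A ↔ A = {s(0, 1)} := by
  simp only [isSpanningTreeEdges_iff, Finset.subset_iff, mem_edgeFinset, mem_edgeSet_top_fin_two]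
  constructor
  · rintro ⟨hA, -, hcard⟩
    have hA1 : #A = 1 := by simpa using hcard
    exact eq_of_subset_of_card_le (fun e he ↦ mem_singleton.mpr (hA he)) (by simp [hA1])
  · rintro rfl
    have h01 : (fromEdgeSet (({s(0, 1)} : Finset (Sym2 (Fin 2))) :
        Set (Sym2 (Fin 2)))).Adj 0 1 := by simp
    refine ⟨fun e he ↦ mem_singleton.mp he, ⟨fun a b ↦ ?_⟩, rfl⟩
    fin_cases a <;> fin_cases b
    exacts [.refl _, h01.reachable, h01.reachable.symm, .refl _]

lemma isSeparatingForestEdges_top_fin_two_iff {A : Finset (Sym2 (Fin 2))} :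
    IsSeparatingForestEdges ⊤ 0 1 A ↔ A = ∅ := by
  rw [isSeparatingForestEdges_iff zero_ne_one]
  constructor
  · rintro ⟨-, -, -, hcard⟩
    exact card_eq_zero.mp (by simpa using hcard)
  · rintro rfl
    refine ⟨empty_subset _, by simp, fun v ↦ ?_, rfl⟩
    fin_cases v
    exacts [.inl (.refl _), .inr (.refl _)]

end SimpleGraph

def separatingForestCount {V : Type} [Fintype V] (G : SimpleGraph V) (x y : V) : ℕ :=
  Nat.card {A : Finset (Sym2 V) // G.IsSeparatingForestEdges x y A}

namespace Nat

open Finset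

variable {ι β : Type*} [Fintype ι] [DecidableEq ι] [Fintype β]

lemma card_subtype_forall_ite (P Q : β → Prop) (S : Finset ι) :
    Nat.card {B : ι → β // ∀ i, if i ∈ S then P (B i) else Q (B i)} =
      Nat.card {b // P b} ^ #S * Nat.card {b // Q b} ^ (Fintype.card ι - #S) := by
  rw [Nat.card_congr (Equiv.subtypePiEquivPi (p := fun i b ↦ if i ∈ S then P b else Q b)),
    Nat.card_pi, prod_congr rfl fun i _ ↦ show Nat.card {b // if i ∈ S then P b else Q b} =
      if i ∈ S then Nat.card {b // P b} else Nat.card {b // Q b} by split_ifs <;> rfl]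
  simp [prod_ite, filter_not, card_sdiff]

/-- Disjointness of `P` and `Q` makes the set `S` unique, so the count splits over `𝒮`. -/
lemma card_subtype_exists_forall_ite {P Q : β → Prop} (hPQ : ∀ b, P b → ¬Q b)
    (𝒮 : Finset (Finset ι)) :
    Nat.card {B : ι → β // ∃ S ∈ 𝒮, ∀ i, if i ∈ S then P (B i) else Q (B i)} =
      ∑ S ∈ 𝒮, Nat.card {b // P b} ^ #S * Nat.card {b // Q b} ^ (Fintype.card ι - #S) := by
  simp_rw [← card_subtype_forall_ite, Nat.card_eq_fintype_card, Fintype.card_subtype]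
  rw [← card_biUnion]
  · congr 1
    ext B
    simp
  · intro S _ T _ hST
    simp only [Function.onFun, disjoint_left, mem_filter, mem_univ, true_and]
    intro B hS hT
    refine hST (Finset.ext fun i ↦ ?_)
    have hSi := hS i
    have hTi := hT i
    split_ifs at hSi hTi with hiS hiT hiT
    exacts [iff_of_true hiS hiT, (hPQ _ hSi hTi).elim, (hPQ _ hTi hSi).elim, iff_of_false hiS hiT]

end Nat

namespace TTG

open SimpleGraph Finset

variable {H : TTG} {i j : Fin 4} {a b : H.V} {B : Fin 4 → Finset (Sym2 H.V)} {S : Finset (Fin 4)}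

abbrev MergeV (H : TTG) : Type := {v : H.V // v ≠ H.Y} ⊕ (Fin 3 × {v : H.V // v ≠ H.X})

-- The merge is a cycle of four copies through the junctions `0, 1, 2, 3`: the `X` of copy `i`
-- lands on junction `junctionX i` and its `Y` on `junctionY i`; the new terminals are the
-- junctions `0` and `3`.
def junctionX : Fin 4 → Fin 4 := ![0, 0, 1, 2]

def junctionY : Fin 4 → Fin 4 := ![3, 1, 2, 3]

def junction (H : TTG) : Fin 4 → H.MergeV :=
  ![Sum.inl ⟨H.X, H.hXY⟩, Sum.inr (0, ⟨H.Y, H.hXY.symm⟩), Sum.inr (1, ⟨H.Y, H.hXY.symm⟩),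
    Sum.inr (2, ⟨H.Y, H.hXY.symm⟩)]

lemma iota13_X (i : Fin 4) : H.iota13 i H.X = H.junction (junctionX i) := by
  fin_cases i <;> simp [iota13, junction, junctionX, H.hXY]

lemma iota13_Y (i : Fin 4) : H.iota13 i H.Y = H.junction (junctionY i) := by
  fin_cases i <;> simp [iota13, junction, junctionY, H.hXY.symm]

lemma iota13_injective (i : Fin 4) : Function.Injective (H.iota13 i) := by
  intro a b h
  fin_cases i <;> simp only [iota13] at h <;> split_ifs at h <;> simp_all

lemma iota13_surjective (w : H.MergeV) : ∃ i a, H.iota13 i a = w := by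
  rcases w with ⟨a, ha⟩ | ⟨j, b, hb⟩
  · exact ⟨0, a, by simp [iota13, ha]⟩
  · fin_cases j
    · exact ⟨1, b, by simp [iota13, hb]⟩
    · exact ⟨2, b, by simp [iota13, hb]⟩
    · exact ⟨3, b, by simp [iota13, hb]⟩

lemma iota13_eq_junction_iff {p : Fin 4} : H.iota13 i a = H.junction p ↔
    a = H.X ∧ p = junctionX i ∨ a = H.Y ∧ p = junctionY i := by
  refine ⟨fun h ↦ ?_, by rintro (⟨rfl, rfl⟩ | ⟨rfl, rfl⟩); exacts [iota13_X i, iota13_Y i]⟩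
  fin_cases i <;> simp only [iota13] at h <;> split_ifs at h <;> fin_cases p <;>
    simp_all [junction, junctionX, junctionY]

lemma eq_X_or_eq_Y_of_iota13_eq (hij : i ≠ j) (h : H.iota13 i a = H.iota13 j b) :
    a = H.X ∨ a = H.Y := by
  fin_cases i <;> fin_cases j <;> try exact absurd rfl hij
  all_goals simp only [iota13, Fin.reduceFinMk] at h; split_ifs at h <;> simp_all

lemma exists_junction_of_iota13_eq (hij : i ≠ j) (h : H.iota13 i a = H.iota13 j b) :
    ∃ p, H.iota13 i a = H.junction p ∧ H.iota13 j b = H.junction p := by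
  rcases eq_X_or_eq_Y_of_iota13_eq hij h with rfl | rfl
  · exact ⟨_, iota13_X i, h ▸ iota13_X i⟩
  · exact ⟨_, iota13_Y i, h ▸ iota13_Y i⟩

def ends (i : Fin 4) : Finset (Fin 4) := {junctionX i, junctionY i}

lemma card_ends_inter_ends_le_one : ∀ i j : Fin 4, i ≠ j → #(ends i ∩ ends j) ≤ 1 := by
  decide

lemma mem_ends_of_iota13_eq_junction {p : Fin 4} (h : H.iota13 i a = H.junction p) :
    p ∈ ends i := by
  rcases iota13_eq_junction_iff.mp h with ⟨-, rfl⟩ | ⟨-, rfl⟩ <;> simp [ends]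

lemma map_iota13_ne_map_iota13 (hij : i ≠ j) {e e' : Sym2 H.V} (he : ¬e.IsDiag) :
    Sym2.map (H.iota13 i) e ≠ Sym2.map (H.iota13 j) e' := by
  induction e using Sym2.ind with | _ a b =>
  induction e' using Sym2.ind with | _ c d =>
  have hab : a ≠ b := by simpa using he
  -- both ends would be junctions shared by copies `i` and `j`
  have key : ∀ {c d}, H.iota13 i a = H.iota13 j c → H.iota13 i b = H.iota13 j d → False := by
    intro c d hac hbd
    obtain ⟨p, hp, hp'⟩ := exists_junction_of_iota13_eq hij hac
    obtain ⟨q, hq, hq'⟩ := exists_junction_of_iota13_eq hij hbd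
    have hpq : p = q := Finset.card_le_one.mp (card_ends_inter_ends_le_one i j hij) p
      (mem_inter.mpr ⟨mem_ends_of_iota13_eq_junction hp, mem_ends_of_iota13_eq_junction hp'⟩) q
      (mem_inter.mpr ⟨mem_ends_of_iota13_eq_junction hq, mem_ends_of_iota13_eq_junction hq'⟩)
    exact hab (iota13_injective i (hp.trans (hpq ▸ hq.symm)))
  rw [Sym2.map_mk, Sym2.map_mk, Ne, Sym2.eq_iff]
  rintro (⟨h1, h2⟩ | ⟨h1, h2⟩)
  exacts [key h1 h2, key h1 h2]

def mergeEdges (H : TTG) (B : Fin 4 → Finset (Sym2 H.V)) : Finset (Sym2 H.MergeV) :=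
  univ.biUnion fun i ↦ (B i).image (Sym2.map (H.iota13 i))

def restrictEdges (H : TTG) (A : Finset (Sym2 H.MergeV)) (i : Fin 4) :
    Finset (Sym2 H.V) :=
  H.G.edgeFinset.filter fun e ↦ Sym2.map (H.iota13 i) e ∈ A

lemma mem_mergeEdges {e : Sym2 H.MergeV} :
    e ∈ H.mergeEdges B ↔ ∃ i, ∃ e' ∈ B i, Sym2.map (H.iota13 i) e' = e := by
  simp [mergeEdges]

lemma card_mergeEdges (hB : ∀ i, B i ⊆ H.G.edgeFinset) :
    #(H.mergeEdges B) = ∑ i, #(B i) := by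
  rw [mergeEdges, card_biUnion]
  · exact sum_congr rfl fun i _ ↦
      card_image_of_injective _ (Sym2.map.injective (iota13_injective i))
  · intro i _ j _ hij
    simp only [Function.onFun, Finset.disjoint_left, mem_image]
    rintro _ ⟨e, he, rfl⟩ ⟨e', -, he'⟩
    exact map_iota13_ne_map_iota13 hij (not_isDiag_of_subset_edgeFinset (hB i) e he) he'.symm

lemma step13_adj {u w : H.MergeV} : (step13 H).G.Adj u w ↔
    ∃ i a b, H.G.Adj a b ∧ H.iota13 i a = u ∧ H.iota13 i b = w := by
  change (fromRel _).Adj u w ↔ _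
  rw [fromRel_adj]
  constructor
  · rintro ⟨-, ⟨i, a, b, hab, rfl, rfl⟩ | ⟨i, a, b, hab, rfl, rfl⟩⟩
    exacts [⟨i, a, b, hab, rfl, rfl⟩, ⟨i, b, a, hab.symm, rfl, rfl⟩]
  · rintro ⟨i, a, b, hab, rfl, rfl⟩
    exact ⟨fun h ↦ hab.ne (iota13_injective i h), Or.inl ⟨i, a, b, hab, rfl, rfl⟩⟩

lemma mem_edgeSet_step13 {e : Sym2 H.MergeV} : e ∈ (step13 H).G.edgeSet ↔
    ∃ i, ∃ e' ∈ H.G.edgeFinset, Sym2.map (H.iota13 i) e' = e := by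
  induction e using Sym2.ind with | _ u w =>
  rw [show s(u, w) ∈ (step13 H).G.edgeSet ↔ (step13 H).G.Adj u w from
    mem_edgeSet _, step13_adj]
  simp only [Sym2.exists, mem_edgeFinset, mem_edgeSet, Sym2.map_mk, Sym2.eq_iff]
  constructor
  · rintro ⟨i, a, b, hab, rfl, rfl⟩
    exact ⟨i, a, b, hab, Or.inl ⟨rfl, rfl⟩⟩
  · rintro ⟨i, a, b, hab, ⟨rfl, rfl⟩ | ⟨rfl, rfl⟩⟩
    exacts [⟨i, a, b, hab, rfl, rfl⟩, ⟨i, b, a, hab.symm, rfl, rfl⟩]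

lemma mergeEdges_subset (hB : ∀ i, B i ⊆ H.G.edgeFinset) :
    H.mergeEdges B ⊆ (step13 H).G.edgeFinset := by
  intro e he
  obtain ⟨i, e', he', rfl⟩ := mem_mergeEdges.mp he
  exact mem_edgeFinset.mpr (mem_edgeSet_step13.mpr ⟨i, e', hB i he', rfl⟩)

lemma restrictEdges_mergeEdges (hB : ∀ i, B i ⊆ H.G.edgeFinset) :
    H.restrictEdges (H.mergeEdges B) = B := by
  ext i e
  simp only [restrictEdges, mem_filter, mem_mergeEdges]
  constructor
  · rintro ⟨he, j, e', he', heq⟩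
    obtain rfl : j = i := by
      by_contra hji
      exact map_iota13_ne_map_iota13 hji (not_isDiag_of_subset_edgeFinset (hB j) e' he') heq
    rwa [← Sym2.map.injective (iota13_injective j) heq]
  · exact fun he ↦ ⟨hB i he, i, e, he, rfl⟩

lemma mergeEdges_restrictEdges {A : Finset (Sym2 H.MergeV)}
    (hA : A ⊆ (step13 H).G.edgeFinset) : H.mergeEdges (H.restrictEdges A) = A := by
  ext e
  simp only [mem_mergeEdges, restrictEdges, mem_filter]
  constructor
  · rintro ⟨i, e', ⟨-, he'⟩, rfl⟩
    exact he'
  · intro he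
    obtain ⟨i, e', he', rfl⟩ := mem_edgeSet_step13.mp (mem_edgeFinset.mp (hA he))
    exact ⟨i, e', ⟨he', he⟩, rfl⟩

lemma card_subtype_eq_of_mergeEdges {P : Finset (Sym2 H.MergeV) → Prop}
    {R : (Fin 4 → Finset (Sym2 H.V)) → Prop} (hP : ∀ A, P A → A ⊆ (step13 H).G.edgeFinset)
    (hR : ∀ B, R B → ∀ i, B i ⊆ H.G.edgeFinset)
    (h : ∀ B, (∀ i, B i ⊆ H.G.edgeFinset) → (P (H.mergeEdges B) ↔ R B)) :
    Nat.card {A // P A} = Nat.card {B // R B} := by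
  refine Nat.card_congr
    { toFun A := ⟨H.restrictEdges A, ?_⟩
      invFun B := ⟨H.mergeEdges B, (h B (hR B B.2)).mpr B.2⟩
      left_inv A := Subtype.ext (mergeEdges_restrictEdges (hP A A.2))
      right_inv B := Subtype.ext (restrictEdges_mergeEdges (hR B B.2)) }
  refine (h _ fun i ↦ filter_subset _ _).mp ?_
  show P (H.mergeEdges (H.restrictEdges A.1))
  rw [mergeEdges_restrictEdges (hP A A.2)]
  exact A.2

abbrev pieceGraph (B : Fin 4 → Finset (Sym2 H.V)) (i : Fin 4) : SimpleGraph H.V :=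
  fromEdgeSet (B i : Set (Sym2 H.V))

abbrev mergeGraph (B : Fin 4 → Finset (Sym2 H.V)) : SimpleGraph H.MergeV :=
  fromEdgeSet (H.mergeEdges B : Set (Sym2 H.MergeV))

def ReachesTerminal (B : Fin 4 → Finset (Sym2 H.V)) (i : Fin 4) : Prop :=
  ∀ a, (pieceGraph B i).Reachable a H.X ∨ (pieceGraph B i).Reachable a H.Y

def unjoinedCopies (B : Fin 4 → Finset (Sym2 H.V)) : Finset (Fin 4) :=
  univ.filter fun i ↦ ¬(pieceGraph B i).Reachable H.X H.Y

lemma mergeGraph_adj {u w : H.MergeV} : (mergeGraph B).Adj u w ↔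
    ∃ i a b, (pieceGraph B i).Adj a b ∧ H.iota13 i a = u ∧ H.iota13 i b = w := by
  simp only [fromEdgeSet_adj, Finset.mem_coe, mem_mergeEdges]
  constructor
  · rintro ⟨⟨i, e, he, heq⟩, hne⟩
    induction e using Sym2.ind with | _ a b =>
    rw [Sym2.map_mk, Sym2.eq_iff] at heq
    rcases heq with ⟨rfl, rfl⟩ | ⟨rfl, rfl⟩
    · exact ⟨i, a, b, ⟨he, fun h ↦ hne (h ▸ rfl)⟩, rfl, rfl⟩
    · exact ⟨i, b, a, ⟨Sym2.eq_swap ▸ he, fun h ↦ hne (h ▸ rfl)⟩, rfl, rfl⟩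
  · rintro ⟨i, a, b, ⟨hab, hne⟩, rfl, rfl⟩
    exact ⟨⟨i, s(a, b), hab, rfl⟩, fun h ↦ hne (iota13_injective i h)⟩

def pieceHom (B : Fin 4 → Finset (Sym2 H.V)) (i : Fin 4) : pieceGraph B i →g mergeGraph B where
  toFun := H.iota13 i
  map_rel' h := mergeGraph_adj.mpr ⟨i, _, _, h, rfl, rfl⟩

lemma reachable_iota13 {a b : H.V} (h : (pieceGraph B i).Reachable a b) :
    (mergeGraph B).Reachable (H.iota13 i a) (H.iota13 i b) :=
  h.map (pieceHom B i)

/-- A vertex that reaches neither terminal inside its own copy stays inside that copy. -/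
lemma not_reachable_junction {a : H.V} (hX : ¬(pieceGraph B i).Reachable a H.X)
    (hY : ¬(pieceGraph B i).Reachable a H.Y) (p : Fin 4) :
    ¬(mergeGraph B).Reachable (H.iota13 i a) (H.junction p) := by
  have hterm : ∀ {c}, (pieceGraph B i).Reachable a c → c ≠ H.X ∧ c ≠ H.Y := fun hc ↦
    ⟨by rintro rfl; exact hX hc, by rintro rfl; exact hY hc⟩
  intro hr
  obtain ⟨c, hc, hcp⟩ := hr.mem_of_adj_closed (S := {w | ∃ c, (pieceGraph B i).Reachable a c ∧
      H.iota13 i c = w}) (by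
    rintro _ w ⟨c, hc, rfl⟩ hadj
    obtain ⟨m, x, y, hxy, hx, rfl⟩ := mergeGraph_adj.mp hadj
    obtain rfl : m = i := by
      by_contra hmi
      rcases eq_X_or_eq_Y_of_iota13_eq (Ne.symm hmi) hx.symm with rfl | rfl
      exacts [(hterm hc).1 rfl, (hterm hc).2 rfl]
    obtain rfl := iota13_injective m hx
    exact ⟨y, hc.trans hxy.reachable, rfl⟩) ⟨a, .refl a, rfl⟩
  rcases iota13_eq_junction_iff.mp hcp with ⟨rfl, -⟩ | ⟨rfl, -⟩
  exacts [(hterm hc).1 rfl, (hterm hc).2 rfl]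

section Coloring

/-- The colour classes of `σ`, extended from the junctions to all vertices of the merge through
the terminal that each vertex reaches inside its copy. -/
def colorClass (B : Fin 4 → Finset (Sym2 H.V)) {β : Type*} (σ : Fin 4 → β) (b : β) :
    Set H.MergeV :=
  {w | ∃ k c, H.iota13 k c = w ∧ ((pieceGraph B k).Reachable c H.X ∧ σ (junctionX k) = b ∨
    (pieceGraph B k).Reachable c H.Y ∧ σ (junctionY k) = b)}

variable {β : Type*} {σ : Fin 4 → β}

lemma color_eq_of_junction_mem_colorClass
    (hσ : ∀ k, (pieceGraph B k).Reachable H.X H.Y → σ (junctionX k) = σ (junctionY k))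
    {k : Fin 4} {c : H.V} {r : Fin 4} {b : β} (hcr : H.iota13 k c = H.junction r)
    (hc : (pieceGraph B k).Reachable c H.X ∧ σ (junctionX k) = b ∨
      (pieceGraph B k).Reachable c H.Y ∧ σ (junctionY k) = b) : σ r = b := by
  rcases iota13_eq_junction_iff.mp hcr with ⟨rfl, rfl⟩ | ⟨rfl, rfl⟩ <;>
    rcases hc with ⟨hr, rfl⟩ | ⟨hr, rfl⟩
  exacts [rfl, hσ k hr, (hσ k hr.symm).symm, rfl]

lemma colorClass_adj_closed
    (hσ : ∀ k, (pieceGraph B k).Reachable H.X H.Y → σ (junctionX k) = σ (junctionY k)) (b : β)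
    (u w : H.MergeV) (hu : u ∈ colorClass B σ b) (huw : (mergeGraph B).Adj u w) :
    w ∈ colorClass B σ b := by
  obtain ⟨k, c, rfl, hc⟩ := hu
  obtain ⟨m, x, y, hxy, hx, rfl⟩ := mergeGraph_adj.mp huw
  by_cases hkm : k = m
  · subst hkm
    obtain rfl := iota13_injective k hx
    exact ⟨k, y, rfl, hc.imp (And.imp_left hxy.symm.reachable.trans)
      (And.imp_left hxy.symm.reachable.trans)⟩
  · obtain ⟨r, hcr, hxr⟩ := exists_junction_of_iota13_eq hkm hx.symm
    have hr := color_eq_of_junction_mem_colorClass hσ hcr hc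
    rcases iota13_eq_junction_iff.mp hxr with ⟨rfl, rfl⟩ | ⟨rfl, rfl⟩
    · exact ⟨m, y, rfl, Or.inl ⟨hxy.symm.reachable, hr⟩⟩
    · exact ⟨m, y, rfl, Or.inr ⟨hxy.symm.reachable, hr⟩⟩

lemma junction_mem_colorClass (p : Fin 4) : H.junction p ∈ colorClass B σ (σ p) := by
  obtain ⟨k, c, hc⟩ := iota13_surjective (H.junction p)
  rcases iota13_eq_junction_iff.mp hc with ⟨rfl, rfl⟩ | ⟨rfl, rfl⟩
  exacts [⟨k, _, hc, Or.inl ⟨.refl _, rfl⟩⟩, ⟨k, _, hc, Or.inr ⟨.refl _, rfl⟩⟩]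

lemma color_eq_of_reachable
    (hσ : ∀ k, (pieceGraph B k).Reachable H.X H.Y → σ (junctionX k) = σ (junctionY k))
    {p q : Fin 4} (h : (mergeGraph B).Reachable (H.junction p) (H.junction q)) : σ q = σ p := by
  obtain ⟨k, c, hc, hcase⟩ :=
    h.mem_of_adj_closed (colorClass_adj_closed hσ (σ p)) (junction_mem_colorClass p)
  exact color_eq_of_junction_mem_colorClass hσ hc hcase

end Coloring

/-- Junctions `p` and `q` lie on a common arc of the cycle of copies once the copies in `D` are
cut out; phrased through the cuts `T` of the cycle so that it is decidable. -/
def CycleLinked (D : Finset (Fin 4)) (p q : Fin 4) : Prop :=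
  ∀ T : Finset (Fin 4), (∀ k ∉ D, (junctionX k ∈ T ↔ junctionY k ∈ T)) → (p ∈ T ↔ q ∈ T)

instance (D : Finset (Fin 4)) (p q : Fin 4) : Decidable (CycleLinked D p q) := by
  unfold CycleLinked; infer_instance

lemma forall_cycleLinked_iff (D : Finset (Fin 4)) : (∀ p q, CycleLinked D p q) ↔ #D ≤ 1 := by
  revert D; decide

lemma cycleLinked_zero_or_three_iff (D : Finset (Fin 4)) :
    (∀ p, CycleLinked D p 0 ∨ CycleLinked D p 3) ∧ ¬CycleLinked D 0 3 ↔ 0 ∈ D ∧ #D = 2 := by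
  revert D; decide

lemma reachable_junction_iff {p q : Fin 4} :
    (mergeGraph B).Reachable (H.junction p) (H.junction q) ↔
      CycleLinked (unjoinedCopies B) p q := by
  refine ⟨fun h T hT ↦ ?_, fun h ↦ ?_⟩
  · refine (Eq.to_iff (color_eq_of_reachable (σ := (· ∈ T)) (fun k hk ↦ ?_) h)).symm
    exact propext (hT k (by simpa [unjoinedCopies] using hk))
  · have hT := h (univ.filter fun r ↦ (mergeGraph B).Reachable (H.junction p) (H.junction r))
      fun k hk ↦ by
        have hXY := reachable_iota13 (i := k) (by simpa [unjoinedCopies] using hk)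
        rw [iota13_X, iota13_Y] at hXY
        simpa using ⟨fun h ↦ h.trans hXY, fun h ↦ h.trans hXY.symm⟩
    simpa using hT

lemma exists_reachable_junction (hR : ∀ i, ReachesTerminal B i) (w : H.MergeV) :
    ∃ p, (mergeGraph B).Reachable w (H.junction p) := by
  obtain ⟨i, a, rfl⟩ := iota13_surjective w
  rcases hR i a with h | h
  · exact ⟨_, iota13_X i ▸ reachable_iota13 h⟩
  · exact ⟨_, iota13_Y i ▸ reachable_iota13 h⟩

lemma reachesTerminal_of_exists_reachable_junction
    (h : ∀ w, ∃ p, (mergeGraph B).Reachable w (H.junction p)) (i : Fin 4) :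
    ReachesTerminal B i := by
  intro a
  by_contra! hn
  obtain ⟨p, hp⟩ := h (H.iota13 i a)
  exact not_reachable_junction hn.1 hn.2 p hp

theorem mergeGraph_connected_iff : (mergeGraph B).Connected ↔
    (∀ i, ReachesTerminal B i) ∧ #(unjoinedCopies B) ≤ 1 := by
  simp_rw [← forall_cycleLinked_iff, ← reachable_junction_iff]
  constructor
  · intro h
    exact ⟨reachesTerminal_of_exists_reachable_junction fun w ↦ ⟨0, h.preconnected _ _⟩,
      fun p q ↦ h.preconnected _ _⟩
  · rintro ⟨hR, hJ⟩
    have : Nonempty H.MergeV := ⟨H.junction 0⟩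
    refine ⟨fun u w ↦ ?_⟩
    obtain ⟨p, hp⟩ := exists_reachable_junction hR u
    obtain ⟨q, hq⟩ := exists_reachable_junction hR w
    exact hp.trans ((hJ p q).trans hq.symm)

theorem mergeGraph_separates_iff :
    ((∀ w, (mergeGraph B).Reachable w (H.junction 0) ∨
      (mergeGraph B).Reachable w (H.junction 3)) ∧
        ¬(mergeGraph B).Reachable (H.junction 0) (H.junction 3)) ↔
      (∀ i, ReachesTerminal B i) ∧ 0 ∈ unjoinedCopies B ∧ #(unjoinedCopies B) = 2 := by
  rw [← cycleLinked_zero_or_three_iff]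
  simp_rw [← reachable_junction_iff]
  constructor
  · rintro ⟨hall, hn⟩
    exact ⟨reachesTerminal_of_exists_reachable_junction fun w ↦
      (hall w).elim (⟨0, ·⟩) (⟨3, ·⟩), fun p ↦ hall _, hn⟩
  · rintro ⟨hR, hall, hn⟩
    refine ⟨fun w ↦ ?_, hn⟩
    obtain ⟨p, hp⟩ := exists_reachable_junction hR w
    exact (hall p).imp hp.trans hp.trans

lemma card_step13 : Fintype.card (step13 H).V + 4 = 4 * Fintype.card H.V := by
  have hX := Fintype.card_subtype_compl (· = H.X)
  have hY := Fintype.card_subtype_compl (· = H.Y)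
  have : 0 < Fintype.card H.V := Fintype.card_pos_iff.mpr ⟨H.X⟩
  simp only [Fintype.card_unique] at hX hY
  change Fintype.card H.MergeV + 4 = _
  simp only [MergeV, Fintype.card_sum, Fintype.card_prod, Fintype.card_fin, hX, hY]
  omega

lemma connected_pieceGraph (hR : ReachesTerminal B i)
    (hXY : (pieceGraph B i).Reachable H.X H.Y) : (pieceGraph B i).Connected := by
  have hX : ∀ a, (pieceGraph B i).Reachable a H.X := fun a ↦ (hR a).elim id (·.trans hXY.symm)
  have : Nonempty H.V := ⟨H.X⟩
  exact ⟨fun a b ↦ (hX a).trans (hX b).symm⟩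

lemma isSpanningTreeEdges_piece_iff (hBi : B i ⊆ H.G.edgeFinset) :
    IsSpanningTreeEdges H.G (B i) ↔
      ReachesTerminal B i ∧ i ∉ unjoinedCopies B ∧ #(B i) + 1 = Fintype.card H.V := by
  simp only [isSpanningTreeEdges_iff, hBi, true_and, unjoinedCopies, mem_filter, mem_univ,
    not_not]
  exact ⟨fun ⟨hc, hcard⟩ ↦ ⟨fun a ↦ .inl (hc.preconnected _ _), hc.preconnected _ _, hcard⟩,
    fun ⟨hR, hXY, hcard⟩ ↦ ⟨connected_pieceGraph hR hXY, hcard⟩⟩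

lemma isSeparatingForestEdges_piece_iff (hBi : B i ⊆ H.G.edgeFinset) :
    IsSeparatingForestEdges H.G H.X H.Y (B i) ↔
      ReachesTerminal B i ∧ i ∈ unjoinedCopies B ∧ #(B i) + 2 = Fintype.card H.V := by
  simp only [isSeparatingForestEdges_iff H.hXY, hBi, true_and, unjoinedCopies, mem_filter,
    mem_univ, ReachesTerminal]
  tauto

lemma card_le_of_reachesTerminal (hBi : B i ⊆ H.G.edgeFinset) (hR : ReachesTerminal B i) :
    Fintype.card H.V ≤ #(B i) + 1 + if i ∈ unjoinedCopies B then 1 else 0 := by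
  by_cases hi : i ∈ unjoinedCopies B
  · simpa [hi] using card_le_card_add_two_of_forall_reachable hBi H.hXY hR
  · have hXY : (pieceGraph B i).Reachable H.X H.Y := by simpa [unjoinedCopies] using hi
    simpa [hi] using card_le_card_add_one_of_connected hBi (connected_pieceGraph hR hXY)

lemma sum_card_add_ite (B : Fin 4 → Finset (Sym2 H.V)) (S : Finset (Fin 4)) :
    ∑ i, (#(B i) + 1 + if i ∈ S then 1 else 0) = ∑ i, #(B i) + 4 + #S := by
  simp [sum_add_distrib]

lemma four_mul_card_le (hB : ∀ i, B i ⊆ H.G.edgeFinset) (hR : ∀ i, ReachesTerminal B i) :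
    4 * Fintype.card H.V ≤ ∑ i, #(B i) + 4 + #(unjoinedCopies B) := by
  rw [← sum_card_add_ite]
  simpa using sum_le_sum fun i (_ : i ∈ univ) ↦ card_le_of_reachesTerminal (hB i) (hR i)

def HasShape (B : Fin 4 → Finset (Sym2 H.V)) (S : Finset (Fin 4)) : Prop :=
  ∀ i, if i ∈ S then IsSeparatingForestEdges H.G H.X H.Y (B i) else IsSpanningTreeEdges H.G (B i)

/-- A piece reaching the terminals has at least `|V(H)| - 1` edges if it joins them and
`|V(H)| - 2` otherwise; the total edge count makes all these bounds tight. -/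
lemma hasShape_iff (hB : ∀ i, B i ⊆ H.G.edgeFinset) : HasShape B S ↔
    (∀ i, ReachesTerminal B i) ∧ unjoinedCopies B = S ∧
      ∑ i, #(B i) + 4 + #S = 4 * Fintype.card H.V := by
  have hpiece : ∀ i, (if i ∈ S then IsSeparatingForestEdges H.G H.X H.Y (B i)
      else IsSpanningTreeEdges H.G (B i)) ↔ ReachesTerminal B i ∧
        (i ∈ unjoinedCopies B ↔ i ∈ S) ∧
        #(B i) + 1 + (if i ∈ S then 1 else 0) = Fintype.card H.V := fun i ↦ by
    split_ifs with hi
    · simp [isSeparatingForestEdges_piece_iff (hB i), hi]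
    · simp [isSpanningTreeEdges_piece_iff (hB i), hi]
  simp only [HasShape, hpiece, forall_and, ← Finset.ext_iff, ← sum_card_add_ite]
  refine and_congr_right fun hR ↦ and_congr_right fun hS ↦ ⟨fun h ↦ by simp [h], fun h ↦ ?_⟩
  subst hS
  have hle : ∀ i ∈ univ, Fintype.card H.V ≤ #(B i) + 1 + if i ∈ unjoinedCopies B then 1 else 0 :=
    fun i _ ↦ card_le_of_reachesTerminal (hB i) (hR i)
  exact fun i ↦ ((sum_eq_sum_iff_of_le hle).mp (by simpa using h.symm) i (mem_univ i)).symm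

theorem isSpanningTreeEdges_mergeEdges_iff (hB : ∀ i, B i ⊆ H.G.edgeFinset) :
    IsSpanningTreeEdges (step13 H).G (H.mergeEdges B) ↔ ∃ S, #S = 1 ∧ HasShape B S := by
  have hV := card_step13 (H := H)
  have hE : #(H.mergeEdges B) = ∑ i, #(B i) := card_mergeEdges hB
  refine isSpanningTreeEdges_iff.trans ⟨fun ⟨_, hc, hcard⟩ ↦ ?_, fun ⟨S, hS, hshape⟩ ↦ ?_⟩
  · obtain ⟨hR, hU⟩ := mergeGraph_connected_iff.mp hc
    have hcard : #(H.mergeEdges B) + 1 = Fintype.card (step13 H).V := hcard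
    have := four_mul_card_le hB hR
    exact ⟨_, by omega, (hasShape_iff hB).mpr ⟨hR, rfl, by omega⟩⟩
  · obtain ⟨hR, rfl, hsum⟩ := (hasShape_iff hB).mp hshape
    exact ⟨mergeEdges_subset hB, mergeGraph_connected_iff.mpr ⟨hR, hS.le⟩,
      (by omega : #(H.mergeEdges B) + 1 = Fintype.card (step13 H).V)⟩

theorem isSeparatingForestEdges_mergeEdges_iff (hB : ∀ i, B i ⊆ H.G.edgeFinset) :
    IsSeparatingForestEdges (step13 H).G (step13 H).X (step13 H).Y (H.mergeEdges B) ↔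
      ∃ S, 0 ∈ S ∧ #S = 2 ∧ HasShape B S := by
  have hV := card_step13 (H := H)
  have hE : #(H.mergeEdges B) = ∑ i, #(B i) := card_mergeEdges hB
  refine (isSeparatingForestEdges_iff (step13 H).hXY).trans
    ⟨fun ⟨_, hn, hall, hcard⟩ ↦ ?_, fun ⟨S, h0, hS, hshape⟩ ↦ ?_⟩
  · obtain ⟨hR, h0, hU⟩ := mergeGraph_separates_iff.mp ⟨hall, hn⟩
    have hcard : #(H.mergeEdges B) + 2 = Fintype.card (step13 H).V := hcard
    exact ⟨_, h0, hU, (hasShape_iff hB).mpr ⟨hR, rfl, by omega⟩⟩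
  · obtain ⟨hR, rfl, hsum⟩ := (hasShape_iff hB).mp hshape
    obtain ⟨hall, hn⟩ := mergeGraph_separates_iff.mpr ⟨hR, h0, hS⟩
    exact ⟨mergeEdges_subset hB, hn, hall,
      (by omega : #(H.mergeEdges B) + 2 = Fintype.card (step13 H).V)⟩

lemma not_isSpanningTreeEdges_of_isSeparatingForestEdges {A : Finset (Sym2 H.V)}
    (hA : IsSeparatingForestEdges H.G H.X H.Y A) : ¬IsSpanningTreeEdges H.G A :=
  fun h ↦ hA.2.2.1 (h.2.1.preconnected _ _)

lemma subset_edgeFinset_of_hasShape (h : HasShape B S) (i : Fin 4) : B i ⊆ H.G.edgeFinset := by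
  have hi := h i
  split_ifs at hi
  exacts [hi.1, hi.1]

lemma card_hasShape (𝒮 : Finset (Finset (Fin 4))) :
    Nat.card {B : Fin 4 → Finset (Sym2 H.V) // ∃ S ∈ 𝒮, HasShape B S} =
      ∑ S ∈ 𝒮, separatingForestCount H.G H.X H.Y ^ #S * spanningTreeCount H.G ^ (4 - #S) :=
  Nat.card_subtype_exists_forall_ite (P := IsSeparatingForestEdges H.G H.X H.Y)
    (Q := IsSpanningTreeEdges H.G) (fun _ ↦ not_isSpanningTreeEdges_of_isSeparatingForestEdges) 𝒮

theorem spanningTreeCount_step13 : spanningTreeCount (step13 H).G =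
    4 * separatingForestCount H.G H.X H.Y * spanningTreeCount H.G ^ 3 := by
  calc spanningTreeCount (step13 H).G
      = Nat.card {B : Fin 4 → Finset (Sym2 H.V) // ∃ S ∈ powersetCard 1 univ, HasShape B S} :=
        card_subtype_eq_of_mergeEdges (P := (step13 H).G.IsSpanningTreeEdges) (fun _ hA ↦ hA.1)
          (fun _ ⟨_, _, hS⟩ ↦ subset_edgeFinset_of_hasShape hS) fun B hB ↦
            (isSpanningTreeEdges_mergeEdges_iff hB).trans (by simp)
    _ = 4 * separatingForestCount H.G H.X H.Y * spanningTreeCount H.G ^ 3 := by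
        rw [card_hasShape, sum_congr rfl fun S hS ↦ by rw [(mem_powersetCard.mp hS).2]]
        simp [mul_assoc]

theorem separatingForestCount_step13 :
    separatingForestCount (step13 H).G (step13 H).X (step13 H).Y =
      3 * separatingForestCount H.G H.X H.Y ^ 2 * spanningTreeCount H.G ^ 2 := by
  calc separatingForestCount (step13 H).G (step13 H).X (step13 H).Y
      = Nat.card {B : Fin 4 → Finset (Sym2 H.V) //
          ∃ S ∈ (powersetCard 2 univ).filter (0 ∈ ·), HasShape B S} :=
        card_subtype_eq_of_mergeEdges
          (P := (step13 H).G.IsSeparatingForestEdges (step13 H).X (step13 H).Y) (fun _ hA ↦ hA.1)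
          (fun _ ⟨_, _, hS⟩ ↦ subset_edgeFinset_of_hasShape hS) fun B hB ↦
            (isSeparatingForestEdges_mergeEdges_iff hB).trans (by simp [and_left_comm, and_assoc])
    _ = 3 * separatingForestCount H.G H.X H.Y ^ 2 * spanningTreeCount H.G ^ 2 := by
        rw [card_hasShape, sum_congr rfl fun S hS ↦ by
          rw [(mem_powersetCard.mp (mem_filter.mp hS).1).2]]
        simp [mul_assoc, show #((powersetCard 2 (univ : Finset (Fin 4))).filter (0 ∈ ·)) = 3 by
          decide]

end TTG

open SimpleGraph TTG

lemma spanningTreeCount_top_fin_two : spanningTreeCount (⊤ : SimpleGraph (Fin 2)) = 1 := by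
  change Nat.card {A // IsSpanningTreeEdges ⊤ A} = 1
  rw [Nat.card_congr (Equiv.subtypeEquivRight fun _ ↦ isSpanningTreeEdges_top_fin_two_iff),
    Nat.card_eq_fintype_card, Fintype.card_subtype_eq]

lemma separatingForestCount_top_fin_two :
    separatingForestCount (⊤ : SimpleGraph (Fin 2)) 0 1 = 1 := by
  rw [separatingForestCount, Nat.card_congr (Equiv.subtypeEquivRight fun _ ↦
    isSeparatingForestEdges_top_fin_two_iff), Nat.card_eq_fintype_card, Fintype.card_subtype_eq]

lemma card_flower13 (n : ℕ) : 3 * Fintype.card (flower13 n).V = 2 * 4 ^ n + 4 := by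
  induction n with
  | zero => rfl
  | succ n ih =>
    have := card_step13 (H := flower13 n)
    change 3 * Fintype.card (step13 (flower13 n)).V = _
    rw [pow_succ]
    omega

section Recurrence

open Real

variable {t f : ℕ → ℕ}

lemma pos_of_recurrence (ht₀ : t 0 = 1) (hf₀ : f 0 = 1) (ht : ∀ n, t (n + 1) = 4 * f n * t n ^ 3)
    (hf : ∀ n, f (n + 1) = 3 * f n ^ 2 * t n ^ 2) (n : ℕ) : 0 < t n ∧ 0 < f n := by
  induction n with
  | zero => simp [ht₀, hf₀]
  | succ n ih =>
    obtain ⟨htpos, hfpos⟩ := ih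
    rw [ht, hf]
    exact ⟨by positivity, by positivity⟩

lemma log_eq_of_recurrence (ht₀ : t 0 = 1) (hf₀ : f 0 = 1)
    (ht : ∀ n, t (n + 1) = 4 * f n * t n ^ 3) (hf : ∀ n, f (n + 1) = 3 * f n ^ 2 * t n ^ 2)
    (n : ℕ) :
    9 * log (t n) = (4 ^ (n + 1) + 6 * n - 4) * log 2 + (4 ^ n - 3 * n - 1) * log 3 ∧
      9 * log (f n) = (4 ^ (n + 1) - 12 * n - 4) * log 2 + (4 ^ n + 6 * n - 1) * log 3 := by
  induction n with
  | zero => simp [ht₀, hf₀]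
  | succ n ih =>
    obtain ⟨hlt, hlf⟩ := ih
    have htpos : (0 : ℝ) < t n := by exact_mod_cast (pos_of_recurrence ht₀ hf₀ ht hf n).1
    have hfpos : (0 : ℝ) < f n := by exact_mod_cast (pos_of_recurrence ht₀ hf₀ ht hf n).2
    have hlog4 : log 4 = 2 * log 2 := by
      rw [show (4 : ℝ) = 2 ^ 2 by norm_num, log_pow]; norm_num
    rw [ht, hf]
    push_cast
    simp only [log_mul, log_pow, hlog4, ne_eq, mul_eq_zero, pow_eq_zero_iff, htpos.ne', hfpos.ne',
      OfNat.ofNat_ne_zero, not_false_eq_true, or_self]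
    push_cast
    constructor
    · linear_combination hlf + 3 * hlt
    · linear_combination 2 * hlf + 2 * hlt

end Recurrence

open Filter Topology in
lemma tendsto_div_of_pow {r a b c d e : ℝ} (hr : 1 < r) (hd : d ≠ 0) :
    Tendsto (fun n : ℕ ↦ (a * r ^ n + b * n + c) / (d * r ^ n + e)) atTop (𝓝 (a / d)) := by
  have hq : 0 < r⁻¹ := inv_pos.mpr (by linarith)
  have hq1 : r⁻¹ < 1 := inv_lt_one_of_one_lt₀ hr
  have h₀ := tendsto_pow_atTop_nhds_zero_of_lt_one hq.le hq1
  have h₁ := tendsto_self_mul_const_pow_of_lt_one hq.le hq1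
  have key := ((h₁.const_mul b).const_add a |>.add (h₀.const_mul c)).div
    ((h₀.const_mul e).const_add d) (by simpa using hd)
  simp only [mul_zero, add_zero] at key
  refine key.congr fun n ↦ ?_
  have hrn : r ^ n ≠ 0 := pow_ne_zero _ (by linarith)
  simp only [Pi.div_apply, inv_pow]
  field_simp

lemma log_spanningTreeCount_flower13 (n : ℕ) :
    9 * Real.log (spanningTreeCount (flower13 n).G) =
      (4 ^ (n + 1) + 6 * n - 4) * Real.log 2 + (4 ^ n - 3 * n - 1) * Real.log 3 :=
  (log_eq_of_recurrence (t := fun n ↦ spanningTreeCount (flower13 n).G)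
    (f := fun n ↦ separatingForestCount (flower13 n).G (flower13 n).X (flower13 n).Y)
    spanningTreeCount_top_fin_two separatingForestCount_top_fin_two
    (fun _ ↦ spanningTreeCount_step13) (fun _ ↦ separatingForestCount_step13) n).1

/-- The asymptotic growth constant of the number of spanning trees of the `(1,3)`-flower:
`lim_{n → ∞} (ln τ(F_n)) / |V(F_n)| = (1 / 6) * (4 * ln 2 + ln 3)`. -/
theorem flower13_spanning_tree_entropy :
    Filter.Tendsto
      (fun n : ℕ =>
        Real.log (spanningTreeCount (flower13 n).G) / (Fintype.card (flower13 n).V : ℝ))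
      Filter.atTop (nhds ((1 / 6) * (4 * Real.log 2 + Real.log 3))) := by
  have hV (n : ℕ) : (3 : ℝ) * Fintype.card (flower13 n).V = 2 * 4 ^ n + 4 := by
    exact_mod_cast card_flower13 n
  have hratio (n : ℕ) :
      Real.log (spanningTreeCount (flower13 n).G) / Fintype.card (flower13 n).V =
        ((4 * Real.log 2 + Real.log 3) * 4 ^ n + (6 * Real.log 2 - 3 * Real.log 3) * n +
          (-4 * Real.log 2 - Real.log 3)) / (6 * 4 ^ n + 12) := by
    rw [div_eq_div_iff (by linarith [hV n, pow_pos (four_pos (α := ℝ)) n]) (by positivity)]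
    linear_combination (-3 * Real.log (spanningTreeCount (flower13 n).G)) * hV n +
      (Fintype.card (flower13 n).V : ℝ) * log_spanningTreeCount_flower13 n
  rw [funext hratio, one_div_mul_eq_div]
  exact tendsto_div_of_pow (by norm_num) (by norm_num)

end
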